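/- The SCD-core of an irreducible k-uniform-prize WVG is empty; that is, every outcome of an irreducible k-uniform-prize WVG is susceptible to an SCD. -/

import Mathlib

open Finset
open scoped Classical

/-- A `k`-Prize Weighted Voting Game with `n` players `{0, ..., n-1}`:
weights, prize values in descending order, and a strict total order `pref` (`≻`)
on coalitions that refines the comparison of total weights. -/
structure kWVG (n k : ℕ) : Type where
  /-- the weights of the players -/
  w : Fin n → ℚ
  w_pos : ∀ i, 0 < w i
  /-- the prize values, in descending order -/
  p : Fin k → ℚ
  p_pos : ∀ j, 0 < p j
  p_desc : ∀ j j' : Fin k, j ≤ j' → p j' ≤ p j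
  k_pos : 0 < k
  k_le_n : k ≤ n
  /-- the strict total order `≻` on coalitions (tie-breaking order) -/
  pref : Finset (Fin n) → Finset (Fin n) → Prop
  pref_irrefl : ∀ A, ¬ pref A A
  pref_trans : ∀ A B C, pref A B → pref B C → pref A C
  pref_total : ∀ A B, A ≠ B → pref A B ∨ pref B A
  pref_weight : ∀ A B, (∑ i ∈ B, w i) < (∑ i ∈ A, w i) → pref A B

variable {n k : ℕ}

/-- `π` is a partition of `D` into nonempty pairwise disjoint coalitions. -/
def IsPartition (π : Finset (Finset (Fin n))) (D : Finset (Fin n)) : Prop :=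
  (∀ C ∈ π, C.Nonempty) ∧
  (∀ A ∈ π, ∀ B ∈ π, A ≠ B → Disjoint A B) ∧
  π.sup id = D

/-- The value `v(C, π)` of coalition `C` in the partition `π`: if `r` is the number of
coalitions of `π` that are `≻`-larger than `C` (so that `C` is the `(r+1)`-st largest
coalition of `π`), then `C` gets the `(r+1)`-st prize if `r < k`, and `0` otherwise. -/
noncomputable def coalitionValue (G : kWVG n k) (π : Finset (Finset (Fin n)))
    (C : Finset (Fin n)) : ℚ :=
  if h : (π.filter (fun C' => G.pref C' C)).card < k then
    G.p ⟨(π.filter (fun C' => G.pref C' C)).card, h⟩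
  else 0

/-- An outcome of the game `G`: a partition of all the players together with
nonnegative payoffs, where each coalition's payoffs sum to its value. -/
structure Outcome (G : kWVG n k) : Type where
  part : Finset (Finset (Fin n))
  ispart : IsPartition part Finset.univ
  x : Fin n → ℚ
  x_nonneg : ∀ i, 0 ≤ x i
  x_budget : ∀ C ∈ part, ∑ i ∈ C, x i = coalitionValue G part C

/-- A single-coalition deviation (SCD) from an outcome with payoffs `x`. -/
def IsSCD (G : kWVG n k) (x : Fin n → ℚ) (C : Finset (Fin n)) : Prop :=
  C.Nonempty ∧
  ∀ π', IsPartition π' Finset.univ → C ∈ π' → (∑ i ∈ C, x i) < coalitionValue G π' C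

/-- A deviating partition: a nonempty family of nonempty, pairwise disjoint coalitions
(that is, a partition of the nonempty set `D := πD.sup id ⊆ N` of deviators). -/
def IsDevPartition (πD : Finset (Finset (Fin n))) : Prop :=
  πD.Nonempty ∧ (∀ C ∈ πD, C.Nonempty) ∧ (∀ A ∈ πD, ∀ B ∈ πD, A ≠ B → Disjoint A B)

/-- A multi-coalition deviation (MCD) from an outcome with payoffs `x`. -/
def IsMCD (G : kWVG n k) (x : Fin n → ℚ) (πD : Finset (Finset (Fin n))) : Prop :=
  IsDevPartition πD ∧
  ∀ π', IsPartition π' Finset.univ → πD ⊆ π' →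
    ∀ C ∈ πD, (∑ i ∈ C, x i) < coalitionValue G π' C

/-- A weak multi-coalition deviation (wMCD) from an outcome with payoffs `x`. -/
def IswMCD (G : kWVG n k) (x : Fin n → ℚ) (πD : Finset (Finset (Fin n))) : Prop :=
  IsDevPartition πD ∧
  ∀ π', IsPartition π' Finset.univ → πD ⊆ π' →
    (∀ C ∈ πD, (∑ i ∈ C, x i) ≤ coalitionValue G π' C) ∧
    (∃ C ∈ πD, (∑ i ∈ C, x i) < coalitionValue G π' C)

/-- A multi-coalition deviation with inter-coalition transfer (MCDT) from an outcome
with payoffs `x`. -/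
def IsMCDT (G : kWVG n k) (x : Fin n → ℚ) (πD : Finset (Finset (Fin n))) : Prop :=
  IsDevPartition πD ∧
  ∀ π', IsPartition π' Finset.univ → πD ⊆ π' →
    (∑ i ∈ πD.sup id, x i) < ∑ C ∈ πD, coalitionValue G π' C

/-- An outcome is SCD-stable if no SCD from it exists. -/
def SCDStable (G : kWVG n k) (ω : Outcome G) : Prop := ¬ ∃ C, IsSCD G ω.x C

/-- An outcome is MCD-stable if no MCD from it exists. -/
def MCDStable (G : kWVG n k) (ω : Outcome G) : Prop := ¬ ∃ πD, IsMCD G ω.x πD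

/-- An outcome is wMCD-stable if no wMCD from it exists. -/
def wMCDStable (G : kWVG n k) (ω : Outcome G) : Prop := ¬ ∃ πD, IswMCD G ω.x πD

/-- An outcome is MCDT-stable if no MCDT from it exists. -/
def MCDTStable (G : kWVG n k) (ω : Outcome G) : Prop := ¬ ∃ πD, IsMCDT G ω.x πD

/-- In a uniform-prize game (all prizes of value 1), a singleton winner is a player `i`
that wins a prize as a singleton regardless of the coalition structure of the others. -/
def SingletonWinner (G : kWVG n k) (i : Fin n) : Prop :=
  ∀ π, IsPartition π Finset.univ → {i} ∈ π → coalitionValue G π {i} = 1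

section AuxProofs

variable {n k : ℕ}

private lemma pref_asymm (G : kWVG n k) {A B : Finset (Fin n)} (h : G.pref A B) :
    ¬ G.pref B A :=
  fun h' => G.pref_irrefl A (G.pref_trans A B A h h')

private lemma sum_parts {π : Finset (Finset (Fin n))}
    (hπ : IsPartition π Finset.univ) (f : Fin n → ℚ) :
    ∑ C ∈ π, ∑ i ∈ C, f i = ∑ i, f i := by
  obtain ⟨-, hdisj, hsup⟩ := hπ
  have hs : π.biUnion id = Finset.univ := by
    rw [← Finset.sup_eq_biUnion]; exact hsup
  conv_rhs => rw [← hs]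
  rw [Finset.sum_biUnion (t := id)
    (fun A hA B hB hAB => hdisj A (Finset.mem_coe.mp hA) B (Finset.mem_coe.mp hB) hAB)]
  rfl

private lemma card_parts_le {π : Finset (Finset (Fin n))}
    (hπ : IsPartition π (Finset.univ : Finset (Fin n))) : π.card ≤ n := by
  obtain ⟨hne, hdisj, hsup⟩ := hπ
  have hs : π.biUnion id = Finset.univ := by
    rw [← Finset.sup_eq_biUnion]; exact hsup
  have hb := Finset.card_biUnion (s := π) (t := id)
    (fun A hA B hB hAB => hdisj A hA B hB hAB)
  rw [hs] at hb
  simp only [id_eq, Finset.card_univ, Fintype.card_fin] at hb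
  calc π.card = ∑ _C ∈ π, 1 := by simp
  _ ≤ ∑ C ∈ π, C.card :=
    Finset.sum_le_sum (fun C hC => Finset.card_pos.mpr (hne C hC))
  _ = n := hb.symm

private lemma value_eq (G : kWVG n k) (hp : ∀ j, G.p j = 1)
    (π : Finset (Finset (Fin n))) (C : Finset (Fin n)) :
    coalitionValue G π C
      = if (π.filter (fun C' => G.pref C' C)).card < k then 1 else 0 := by
  unfold coalitionValue
  split_ifs with h
  · exact hp _
  · rfl

private lemma beaters_lt (G : kWVG n k) {S : Finset (Finset (Fin n))}
    {A B : Finset (Fin n)} (hA : A ∈ S) (h : G.pref A B) :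
    (S.filter fun C => G.pref C A).card < (S.filter fun C => G.pref C B).card := by
  apply Finset.card_lt_card
  have hsub : (S.filter fun C => G.pref C A) ⊆ (S.filter fun C => G.pref C B) := by
    intro C hC
    rw [Finset.mem_filter] at hC ⊢
    exact ⟨hC.1, G.pref_trans _ _ _ hC.2 h⟩
  refine (Finset.ssubset_iff_of_subset hsub).mpr ⟨A, Finset.mem_filter.mpr ⟨hA, h⟩, ?_⟩
  exact fun hmem => G.pref_irrefl A (Finset.mem_filter.mp hmem).2

private lemma beats_lt (G : kWVG n k) {A B : Finset (Fin n)} (h : G.pref A B) :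
    (Finset.univ.filter fun C => G.pref B C).card
      < (Finset.univ.filter fun C => G.pref A C).card := by
  apply Finset.card_lt_card
  have hsub : (Finset.univ.filter fun C => G.pref B C)
      ⊆ (Finset.univ.filter fun C => G.pref A C) := by
    intro C hC
    rw [Finset.mem_filter] at hC ⊢
    exact ⟨hC.1, G.pref_trans _ _ _ h hC.2⟩
  refine (Finset.ssubset_iff_of_subset hsub).mpr
    ⟨B, Finset.mem_filter.mpr ⟨Finset.mem_univ B, h⟩, ?_⟩
  exact fun hmem => G.pref_irrefl B (Finset.mem_filter.mp hmem).2

private lemma total_le (G : kWVG n k) (hp : ∀ j, G.p j = 1) (ω : Outcome G) :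
    ∑ i, ω.x i ≤ (k : ℚ) := by
  have h1 : ∑ i, ω.x i = ∑ C ∈ ω.part, ∑ i ∈ C, ω.x i := (sum_parts ω.ispart ω.x).symm
  have h2 : ∑ C ∈ ω.part, ∑ i ∈ C, ω.x i
      = ((ω.part.filter (fun C => (ω.part.filter (fun C' => G.pref C' C)).card < k)).card : ℚ) := by
    rw [← Finset.sum_boole]
    refine Finset.sum_congr rfl (fun C hC => ?_)
    rw [ω.x_budget C hC, value_eq G hp]
  have h3 : (ω.part.filter fun C =>
      (ω.part.filter (fun C' => G.pref C' C)).card < k).card ≤ k := by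
    have hinj := Finset.card_le_card_of_injOn
      (s := ω.part.filter fun C => (ω.part.filter (fun C' => G.pref C' C)).card < k)
      (f := fun C => (ω.part.filter (fun C' => G.pref C' C)).card)
      (t := Finset.range k) ?_ ?_
    · simpa using hinj
    · intro C hC
      rw [Finset.mem_coe, Finset.mem_range]
      exact (Finset.mem_filter.mp hC).2
    · intro C hC C' hC' hEq
      dsimp only at hEq
      by_contra hne
      rcases G.pref_total C C' hne with hpf | hpf
      · have := beaters_lt G (Finset.mem_filter.mp (Finset.mem_coe.mp hC)).1 hpf
        omega
      · have := beaters_lt G (Finset.mem_filter.mp (Finset.mem_coe.mp hC')).1 hpf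
        omega
  rw [h1, h2]
  exact_mod_cast h3

end AuxProofs

/-- The SCD-core of an irreducible `k`-uniform-prize WVG is empty: every outcome is
susceptible to an SCD. -/

theorem irreducible_game_empty_SCD_core (n k : ℕ) (G : kWVG n k)
    (hp : ∀ j, G.p j = 1) (hirr : ∀ i, ¬ SingletonWinner G i) :
    ∀ ω : Outcome G, (∃ C, IsSCD G ω.x C) ∧ ¬ SCDStable G ω := by
  intro ω
  have hscd : ∃ C, IsSCD G ω.x C := by
    have hx0 : ∀ i, 0 ≤ ω.x i := ω.x_nonneg
    have htot : ∑ i, ω.x i ≤ (k : ℚ) := total_le G hp ω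
    set x := ω.x with hxdef
    -- there is a player with payoff < 1
    have hex : ∃ i, x i < 1 := by
      by_contra hc
      push_neg at hc
      have hn : ((n : ℚ)) ≤ ∑ i, x i := by
        calc ((n : ℚ)) = ∑ _i : Fin n, (1 : ℚ) := by simp
        _ ≤ ∑ i, x i := Finset.sum_le_sum (fun i _ => hc i)
      have hnk : n ≤ k := by
        have : (n : ℚ) ≤ (k : ℚ) := hn.trans htot
        exact_mod_cast this
      have hkn : k = n := le_antisymm G.k_le_n hnk
      have hn0 : 0 < n := lt_of_lt_of_le G.k_pos G.k_le_n
      apply hirr ⟨0, hn0⟩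
      intro π₁ hπ₁ hmem
      rw [value_eq G hp]
      have hlt : (π₁.filter (fun C' => G.pref C' {(⟨0, hn0⟩ : Fin n)})).card < k := by
        have hss : π₁.filter (fun C' => G.pref C' {(⟨0, hn0⟩ : Fin n)}) ⊂ π₁ := by
          refine (Finset.ssubset_iff_of_subset (Finset.filter_subset _ _)).mpr
            ⟨{(⟨0, hn0⟩ : Fin n)}, hmem, ?_⟩
          exact fun hmem' => G.pref_irrefl _ (Finset.mem_filter.mp hmem').2
        have h1 := Finset.card_lt_card hss
        have h2 := card_parts_le hπ₁
        omega
      rw [if_pos hlt]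
    obtain ⟨i0, hi0⟩ := hex
    -- the family of nonempty coalitions with payoff sum < 1, and its pref-max D
    set F : Finset (Finset (Fin n)) :=
      Finset.univ.filter (fun C => C.Nonempty ∧ ∑ i ∈ C, x i < 1) with hFdef
    have hFne : F.Nonempty :=
      ⟨{i0}, Finset.mem_filter.mpr
        ⟨Finset.mem_univ _, Finset.singleton_nonempty i0, by simpa using hi0⟩⟩
    obtain ⟨D, hDF, hDkey⟩ := Finset.exists_max_image F
      (fun C => (Finset.univ.filter (fun B => G.pref C B)).card) hFne
    have hDmem := Finset.mem_filter.mp hDF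
    have hDne : D.Nonempty := hDmem.2.1
    have hDx : ∑ i ∈ D, x i < 1 := hDmem.2.2
    have hDmax : ∀ C ∈ F, C ≠ D → G.pref D C := by
      intro C hC hne
      rcases G.pref_total D C (fun h => hne h.symm) with h | h
      · exact h
      · exact absurd (hDkey C hC) (not_le.mpr (beats_lt G h))
    refine ⟨D, hDne, fun π' hπ' hDπ' => ?_⟩
    rw [value_eq G hp]
    by_cases hbc : (π'.filter (fun C' => G.pref C' D)).card < k
    · rw [if_pos hbc]; exact hDx
    · exfalso
      push_neg at hbc
      set Bs := π'.filter (fun C' => G.pref C' D) with hBsdef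
      have hBsub : Bs ⊆ π' := Finset.filter_subset _ _
      have hBne : ∀ B ∈ Bs, B.Nonempty := fun B hB => hπ'.1 B (hBsub hB)
      have hBpref : ∀ B ∈ Bs, G.pref B D := fun B hB => (Finset.mem_filter.mp hB).2
      have hB1 : ∀ B ∈ Bs, (1 : ℚ) ≤ ∑ i ∈ B, x i := by
        intro B hB
        by_contra hlt
        push_neg at hlt
        have hBF : B ∈ F := Finset.mem_filter.mpr ⟨Finset.mem_univ _, hBne B hB, hlt⟩
        have hBD : B ≠ D := fun h => G.pref_irrefl D (h ▸ hBpref B hB)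
        exact pref_asymm G (hDmax B hBF hBD) (hBpref B hB)
      have hsum_pi : ∑ C ∈ π', ∑ i ∈ C, x i = ∑ i, x i := sum_parts hπ' x
      have hinner_nonneg : ∀ C ∈ π', (0 : ℚ) ≤ ∑ i ∈ C, x i :=
        fun C _ => Finset.sum_nonneg (fun i _ => hx0 i)
      have hBs_le : ∑ B ∈ Bs, ∑ i ∈ B, x i ≤ ∑ i, x i := by
        rw [← hsum_pi]
        exact Finset.sum_le_sum_of_subset_of_nonneg hBsub (fun C hC _ => hinner_nonneg C hC)
      have hcard_le : (Bs.card : ℚ) ≤ ∑ B ∈ Bs, ∑ i ∈ B, x i := by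
        calc (Bs.card : ℚ) = ∑ _B ∈ Bs, (1 : ℚ) := by simp
        _ ≤ _ := Finset.sum_le_sum hB1
      have hkq : (k : ℚ) ≤ (Bs.card : ℚ) := by exact_mod_cast hbc
      have hBsum_eq : ∑ B ∈ Bs, ∑ i ∈ B, x i = (Bs.card : ℚ) :=
        le_antisymm (by linarith) hcard_le
      have htot_eq : ∑ i, x i = (k : ℚ) := le_antisymm htot (by linarith)
      have hcard_eq : (Bs.card : ℚ) = (k : ℚ) := by linarith
      have hBall : ∀ B ∈ Bs, ∑ i ∈ B, x i = 1 := by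
        have hz : ∑ B ∈ Bs, (∑ i ∈ B, x i - 1) = 0 := by
          rw [Finset.sum_sub_distrib]
          simp [hBsum_eq]
        have hall := (Finset.sum_eq_zero_iff_of_nonneg
          (fun B hB => by linarith [hB1 B hB])).mp hz
        intro B hB
        have := hall B hB
        linarith
      have hDx0 : ∑ i ∈ D, x i = 0 := by
        have hDnotBs : D ∉ Bs := fun h => G.pref_irrefl D (Finset.mem_filter.mp h).2
        have hins : insert D Bs ⊆ π' := Finset.insert_subset hDπ' hBsub
        have hle : ∑ C ∈ insert D Bs, ∑ i ∈ C, x i ≤ ∑ i, x i := by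
          rw [← hsum_pi]
          exact Finset.sum_le_sum_of_subset_of_nonneg hins (fun C hC _ => hinner_nonneg C hC)
        rw [Finset.sum_insert hDnotBs, hBsum_eq] at hle
        have h0 : 0 ≤ ∑ i ∈ D, x i := Finset.sum_nonneg fun i _ => hx0 i
        linarith
      -- every beater of D is a singleton of payoff 1
      have hBsing : ∀ B ∈ Bs, ∃ j, B = {j} ∧ x j = 1 := by
        intro B hB
        have hxB : ∑ i ∈ B, x i = 1 := hBall B hB
        have hjex : ∃ j ∈ B, 0 < x j := by
          by_contra hcj
          push_neg at hcj
          have hz : ∑ i ∈ B, x i = 0 :=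
            le_antisymm (Finset.sum_nonpos hcj) (Finset.sum_nonneg fun i _ => hx0 i)
          rw [hz] at hxB
          norm_num at hxB
        obtain ⟨j, hjB, hjpos⟩ := hjex
        have hBj : B = {j} := by
          by_contra hBj
          have hbex : ∃ b ∈ B, b ≠ j := by
            by_contra hcb
            push_neg at hcb
            exact hBj (Finset.eq_singleton_iff_unique_mem.mpr ⟨hjB, fun b hb => hcb b hb⟩)
          obtain ⟨b, hbB, hbj⟩ := hbex
          have hBD : B ≠ D := fun h => G.pref_irrefl D (h ▸ hBpref B hB)
          have hdisjBD : Disjoint D B :=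
            hπ'.2.1 D hDπ' B (hBsub hB) (fun h => hBD h.symm)
          have hjDB : j ∈ D ∪ B := Finset.mem_union_right _ hjB
          have hjD : j ∉ D := fun h => (Finset.disjoint_left.mp hdisjBD h) hjB
          have hsumDB : ∑ i ∈ D ∪ B, x i = 1 := by
            rw [Finset.sum_union hdisjBD, hDx0, hxB]
            ring
          have h5 := Finset.sum_erase_add (D ∪ B) x hjDB
          have hsumC : ∑ i ∈ (D ∪ B).erase j, x i = 1 - x j := by linarith
          have hCb : b ∈ (D ∪ B).erase j :=
            Finset.mem_erase.mpr ⟨hbj, Finset.mem_union_right _ hbB⟩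
          have hCF : (D ∪ B).erase j ∈ F := Finset.mem_filter.mpr
            ⟨Finset.mem_univ _, ⟨b, hCb⟩, by rw [hsumC]; linarith⟩
          have hCD : (D ∪ B).erase j ≠ D := by
            intro h
            exact (Finset.disjoint_left.mp hdisjBD (h ▸ hCb)) hbB
          have hprefDC : G.pref D ((D ∪ B).erase j) := hDmax _ hCF hCD
          have hwC : ∑ i ∈ D, G.w i < ∑ i ∈ (D ∪ B).erase j, G.w i := by
            have h1 : ∑ i ∈ (D ∪ B).erase j, G.w i
                = ∑ i ∈ D, G.w i + ∑ i ∈ B.erase j, G.w i := by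
              rw [Finset.erase_union_distrib, Finset.erase_eq_of_notMem hjD,
                Finset.sum_union (hdisjBD.mono_right (Finset.erase_subset _ _))]
            have h2 : 0 < ∑ i ∈ B.erase j, G.w i :=
              Finset.sum_pos (fun i _ => G.w_pos i) ⟨b, Finset.mem_erase.mpr ⟨hbj, hbB⟩⟩
            linarith
          exact pref_asymm G hprefDC (G.pref_weight _ D hwC)
        refine ⟨j, hBj, ?_⟩
        rw [hBj] at hxB
        simpa using hxB
      have hBs_ne : Bs.Nonempty := Finset.card_pos.mp (lt_of_lt_of_le G.k_pos hbc)
      obtain ⟨B0, hB0⟩ := hBs_ne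
      obtain ⟨j, hB0j, hxj⟩ := hBsing B0 hB0
      have hprefjD : G.pref {j} D := hB0j ▸ hBpref B0 hB0
      -- use irreducibility at j
      have hj := hirr j
      unfold SingletonWinner at hj
      push_neg at hj
      obtain ⟨π₁, hπ₁, hjmem, hval1⟩ := hj
      rw [value_eq G hp] at hval1
      have hkE : k ≤ (π₁.filter (fun C' => G.pref C' ({j} : Finset (Fin n)))).card := by
        by_contra hck
        push_neg at hck
        rw [if_pos hck] at hval1
        exact hval1 rfl
      set Es := π₁.filter (fun C' => G.pref C' ({j} : Finset (Fin n))) with hEsdef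
      have hEsub : Es ⊆ π₁ := Finset.filter_subset _ _
      have hEex : ∃ E ∈ Es, ∑ i ∈ E, x i < 1 := by
        by_contra hce
        push_neg at hce
        have hjnot : ({j} : Finset (Fin n)) ∉ Es :=
          fun h => G.pref_irrefl _ (Finset.mem_filter.mp h).2
        have hins : insert ({j} : Finset (Fin n)) Es ⊆ π₁ :=
          Finset.insert_subset hjmem hEsub
        have hle : ∑ C ∈ insert ({j} : Finset (Fin n)) Es, ∑ i ∈ C, x i ≤ ∑ i, x i := by
          rw [← sum_parts hπ₁ x]
          exact Finset.sum_le_sum_of_subset_of_nonneg hins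
            (fun C _ _ => Finset.sum_nonneg fun i _ => hx0 i)
        rw [Finset.sum_insert hjnot] at hle
        have h1 : (Es.card : ℚ) ≤ ∑ C ∈ Es, ∑ i ∈ C, x i := by
          calc (Es.card : ℚ) = ∑ _C ∈ Es, (1 : ℚ) := by simp
          _ ≤ _ := Finset.sum_le_sum hce
        have h2 : (k : ℚ) ≤ (Es.card : ℚ) := by exact_mod_cast hkE
        have h3 : ∑ i ∈ ({j} : Finset (Fin n)), x i = 1 := by simpa using hxj
        rw [h3, htot_eq] at hle
        linarith
      obtain ⟨E, hEmem, hElt⟩ := hEex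
      have hEne : E.Nonempty := hπ₁.1 E (hEsub hEmem)
      have hEF : E ∈ F := Finset.mem_filter.mpr ⟨Finset.mem_univ _, hEne, hElt⟩
      have hprefEj : G.pref E {j} := (Finset.mem_filter.mp hEmem).2
      by_cases hED : E = D
      · exact G.pref_irrefl D (G.pref_trans _ _ _ (hED ▸ hprefEj) hprefjD)
      · exact G.pref_irrefl D (G.pref_trans _ _ _
          (G.pref_trans _ _ _ (hDmax E hEF hED) hprefEj) hprefjD)
  exact ⟨hscd, fun hst => hst hscd⟩
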